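/- arXiv:1410.1411 — 4 statements merged into one kernel-verified Lean document; each statement's English description precedes it below -/
import Mathlib

section
/- If η is a P-stationary measure vector and v ∈ P(ℝ^d) is an invariant point (A(i)v = v for all i ∈ X), then the weight η_j({v}) is the same for all j ∈ X. -/
open MeasureTheory
open scoped LinearAlgebra.Projectivization BigOperators

noncomputable section

namespace PaperNS

/-- Real projective space `P(ℝ^d)`. -/
abbrev Pd (d : ℕ) := ℙ ℝ (Fin d → ℝ)

instance (d : ℕ) : TopologicalSpace (Pd d) :=
  TopologicalSpace.coinduced (Projectivization.mk' ℝ) inferInstance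

instance (d : ℕ) : MeasurableSpace (Pd d) := borel _
instance (d : ℕ) : BorelSpace (Pd d) := ⟨rfl⟩

/-- Projective action of an invertible linear map on `P(ℝ^d)`. -/
def act (d : ℕ) (g : (Fin d → ℝ) ≃ₗ[ℝ] (Fin d → ℝ)) : Pd d → Pd d :=
  Projectivization.map (g : (Fin d → ℝ) →ₗ[ℝ] (Fin d → ℝ)) g.injective

lemma measurableSet_singleton_pd (d : ℕ) (v : Pd d) :
    MeasurableSet ({v} : Set (Pd d)) := by
  have hclosed : IsClosed ({v} : Set (Pd d)) := by
    rw [← isOpen_compl_iff]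
    have hset : (Projectivization.mk' ℝ ⁻¹' ({v}ᶜ : Set (Pd d)))
        = Subtype.val ⁻¹' (((ℝ ∙ v.rep : Submodule ℝ (Fin d → ℝ)) : Set (Fin d → ℝ))ᶜ) := by
      ext w
      simp only [Set.mem_preimage, Set.mem_compl_iff, Set.mem_singleton_iff, SetLike.mem_coe]
      have : Projectivization.mk' ℝ w = v ↔ w.1 ∈ (ℝ ∙ v.rep : Submodule ℝ (Fin d → ℝ)) := by
        conv_lhs => rw [← Projectivization.mk_rep v]
        rw [Projectivization.mk'_eq_mk,
          Projectivization.mk_eq_mk_iff' ℝ _ _ w.2 v.rep_nonzero, Submodule.mem_span_singleton]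
      rw [this]
    have hcl : IsClosed (((ℝ ∙ v.rep : Submodule ℝ (Fin d → ℝ)) : Set (Fin d → ℝ))) :=
      Submodule.closed_of_finiteDimensional _
    exact isOpen_coinduced.mpr (hset ▸ (hcl.isOpen_compl.preimage continuous_subtype_val))
  exact hclosed.measurableSet

lemma continuous_act (d : ℕ) (g : (Fin d → ℝ) ≃ₗ[ℝ] (Fin d → ℝ)) : Continuous (act d g) := by
  rw [continuous_coinduced_dom]
  have hlift : Continuous (fun w : {x : Fin d → ℝ // x ≠ 0} =>
      (⟨g w.1, fun c => w.2 (g.injective (by simp [c]))⟩ : {x : Fin d → ℝ // x ≠ 0})) := by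
    exact Continuous.subtype_mk
      ((LinearMap.continuous_of_finiteDimensional (g : (Fin d → ℝ) →ₗ[ℝ] (Fin d → ℝ))).comp
        continuous_subtype_val) _
  have : (act d g) ∘ (Projectivization.mk' ℝ)
      = (Projectivization.mk' ℝ) ∘ (fun w : {x : Fin d → ℝ // x ≠ 0} =>
      (⟨g w.1, fun c => w.2 (g.injective (by simp [c]))⟩ : {x : Fin d → ℝ // x ≠ 0})) := by
    funext w
    simp only [Function.comp_apply, Projectivization.mk'_eq_mk, act, Projectivization.map_mk,
      LinearEquiv.coe_coe]
  rw [this]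
  exact continuous_coinduced_rng.comp hlift

lemma injective_act (d : ℕ) (g : (Fin d → ℝ) ≃ₗ[ℝ] (Fin d → ℝ)) :
    Function.Injective (act d g) :=
  Projectivization.map_injective (τ := RingHom.id ℝ) _ g.injective

/-- **Remark (invariant atoms have constant weight).** If `η` is a `P`-stationary measure vector
and `v ∈ P(ℝ^d)` is an invariant point, i.e. `A(i) v = v` for all `i`, then the weight
`η_j({v})` is the same for all `j ∈ X`. -/
theorem invariant_point_constant_weight {q d : ℕ} (hq : 0 < q)
    (P : Fin q → Fin q → ℝ) (p : Fin q → ℝ)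
    (hnonneg : ∀ i j, 0 ≤ P i j) (hstoch : ∀ i, ∑ j, P i j = 1)
    (haper : ∃ N : ℕ, 1 ≤ N ∧ ∀ i j, 0 < (Matrix.of P ^ N) i j)
    (hppos : ∀ i, 0 < p i) (hpsum : ∑ i, p i = 1)
    (hpstat : ∀ j, ∑ s, p s * P s j = p j)
    (A : Fin q → (Fin d → ℝ) ≃ₗ[ℝ] (Fin d → ℝ))
    (η : Fin q → Measure (Pd d)) (hη : ∀ i, IsFiniteMeasure (η i))
    (hstat : ∀ j, ENNReal.ofReal (p j) • η j
      = ∑ i, ENNReal.ofReal (p i * P i j) • (η i).map (act d (A i)))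
    (v : Pd d) (hv : ∀ i, act d (A i) v = v) :
    ∀ j j', η j {v} = η j' {v} := by
  have hm : MeasurableSet ({v} : Set (Pd d)) := measurableSet_singleton_pd d v
  have hpre : ∀ i, (act d (A i)) ⁻¹' {v} = {v} := by
    intro i
    ext w
    simp only [Set.mem_preimage, Set.mem_singleton_iff]
    constructor
    · intro h; exact injective_act d (A i) (h.trans (hv i).symm)
    · rintro rfl; exact hv i
  have hfin : ∀ i, η i {v} ≠ ⊤ := fun i => @measure_ne_top _ _ (η i) (hη i) _
  -- evaluate the stationarity equation at {v}
  have key : ∀ j, ENNReal.ofReal (p j) * η j {v}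
      = ∑ i, ENNReal.ofReal (p i * P i j) * η i {v} := by
    intro j
    have h1 : (ENNReal.ofReal (p j) • η j) {v}
        = (∑ i, ENNReal.ofReal (p i * P i j) • (η i).map (act d (A i))) {v} := by
      rw [hstat j]
    rw [Measure.smul_apply, smul_eq_mul, Measure.finset_sum_apply] at h1
    rw [h1]
    refine Finset.sum_congr rfl fun i _ => ?_
    rw [Measure.smul_apply, smul_eq_mul,
      Measure.map_apply (continuous_act d (A i)).measurable hm, hpre i]
  set r : Fin q → ℝ := fun i => (η i {v}).toReal with hr
  have rkey : ∀ j, p j * r j = ∑ i, p i * P i j * r i := by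
    intro j
    have := congrArg ENNReal.toReal (key j)
    rw [ENNReal.toReal_mul, ENNReal.toReal_ofReal (hppos j).le,
      ENNReal.toReal_sum (fun i _ => ENNReal.mul_ne_top ENNReal.ofReal_ne_top (hfin i))] at this
    rw [this]
    refine Finset.sum_congr rfl fun i _ => ?_
    rw [ENNReal.toReal_mul, ENNReal.toReal_ofReal (mul_nonneg (hppos i).le (hnonneg i j))]
  -- iterate the stationarity relation
  have hpow : ∀ n : ℕ, ∀ j, p j * r j = ∑ i, p i * ((Matrix.of P ^ (n + 1)) i j) * r i := by
    intro n
    induction n with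
    | zero =>
      intro j
      simpa [pow_one, Matrix.of_apply] using rkey j
    | succ n ih =>
      intro j
      calc p j * r j = ∑ s, p s * P s j * r s := rkey j
        _ = ∑ s, P s j * (p s * r s) := by
            refine Finset.sum_congr rfl fun s _ => by ring
        _ = ∑ s, P s j * (∑ i, p i * ((Matrix.of P ^ (n + 1)) i s) * r i) := by
            refine Finset.sum_congr rfl fun s _ => by rw [← ih s]
        _ = ∑ s, ∑ i, p i * ((Matrix.of P ^ (n + 1)) i s * P s j) * r i := by
            refine Finset.sum_congr rfl fun s _ => ?_
            rw [Finset.mul_sum]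
            refine Finset.sum_congr rfl fun i _ => by ring
        _ = ∑ i, ∑ s, p i * ((Matrix.of P ^ (n + 1)) i s * P s j) * r i := Finset.sum_comm
        _ = ∑ i, p i * ((Matrix.of P ^ (n + 2)) i j) * r i := by
            refine Finset.sum_congr rfl fun i _ => ?_
            have hmm : (Matrix.of P ^ (n + 2)) i j
                = ∑ s, (Matrix.of P ^ (n + 1)) i s * P s j := by
              simp [pow_succ, Matrix.mul_apply]
            rw [hmm, Finset.mul_sum, Finset.sum_mul]
  -- p is stationary for all powers
  have hppow : ∀ n : ℕ, ∀ j, ∑ i, p i * ((Matrix.of P ^ (n + 1)) i j) = p j := by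
    intro n
    induction n with
    | zero =>
      intro j
      simpa [pow_one, Matrix.of_apply] using hpstat j
    | succ n ih =>
      intro j
      calc ∑ i, p i * ((Matrix.of P ^ (n + 2)) i j)
          = ∑ i, ∑ s, p i * ((Matrix.of P ^ (n + 1)) i s) * P s j := by
            refine Finset.sum_congr rfl fun i _ => ?_
            have hmm : (Matrix.of P ^ (n + 2)) i j
                = ∑ s, (Matrix.of P ^ (n + 1)) i s * P s j := by
              simp [pow_succ, Matrix.mul_apply]
            rw [hmm, Finset.mul_sum]
            refine Finset.sum_congr rfl fun s _ => by ring
        _ = ∑ s, (∑ i, p i * ((Matrix.of P ^ (n + 1)) i s)) * P s j := by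
            rw [Finset.sum_comm]
            exact Finset.sum_congr rfl fun s _ => (Finset.sum_mul _ _ _).symm
        _ = ∑ s, p s * P s j := by
            refine Finset.sum_congr rfl fun s _ => by rw [ih s]
        _ = p j := hpstat j
  obtain ⟨N, hN1, hNpos⟩ := haper
  obtain ⟨m, rfl⟩ : ∃ m, N = m + 1 := ⟨N - 1, (Nat.succ_pred_eq_of_pos hN1).symm⟩
  -- take a maximizer of r
  haveI : Nonempty (Fin q) := ⟨⟨0, hq⟩⟩
  obtain ⟨j0, -, hj0⟩ := Finset.exists_max_image Finset.univ r ⟨Classical.arbitrary _,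
    Finset.mem_univ _⟩
  have hcpos : ∀ i, 0 < p i * ((Matrix.of P ^ (m + 1)) i j0) :=
    fun i => mul_pos (hppos i) (hNpos i j0)
  have hsum_eq : ∑ i, p i * ((Matrix.of P ^ (m + 1)) i j0) * r i
      = ∑ i, p i * ((Matrix.of P ^ (m + 1)) i j0) * r j0 := by
    rw [← hpow m j0, ← Finset.sum_mul, hppow m j0]
  have hterm : ∀ i ∈ Finset.univ, p i * ((Matrix.of P ^ (m + 1)) i j0) * r i
      = p i * ((Matrix.of P ^ (m + 1)) i j0) * r j0 := by
    rw [← Finset.sum_eq_sum_iff_of_le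
      (fun i _ => mul_le_mul_of_nonneg_left (hj0 i (Finset.mem_univ i)) (hcpos i).le)]
    exact hsum_eq
  have hconst : ∀ i, r i = r j0 := fun i =>
    mul_left_cancel₀ (hcpos i).ne' (hterm i (Finset.mem_univ i))
  intro j j'
  have : r j = r j' := (hconst j).trans (hconst j').symm
  exact (ENNReal.toReal_eq_toReal_iff' (hfin j) (hfin j')).mp this

end PaperNS
end
end

section
/- For α ∈ GL(d,ℝ) and v ∈ P(ℝ^d), the derivative Dα(v) of the projective action of α satisfies 1/(‖α‖·‖α^{-1}‖) ≤ ‖Dα(v)v̇‖/‖v̇‖ ≤ ‖α‖·‖α^{-1}‖ for every nonzero v̇ ∈ v^⊥, where Dα(v)v̇ = proj_{α(v)}(α(v̇)) / (‖α(v̲)‖/‖v̲‖). -/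
open scoped RealInnerProductSpace

noncomputable section

/-- Euclidean space `ℝ^d`. -/
abbrev E (d : ℕ) := EuclideanSpace ℝ (Fin d)

/-- The derivative at the line through `v` of the projective action of `α`, evaluated on a
tangent vector `w ⊥ v`:  `Dα(v)w = proj_{α v}(α w) / (‖α v‖ / ‖v‖)`, where `proj_u` is the
orthogonal projection onto the hyperplane orthogonal to `u`. -/
def projDeriv {d : ℕ} (α : E d ≃L[ℝ] E d) (v w : E d) : E d :=
  (‖v‖ / ‖α v‖) • (α w - (⟪α w, α v⟫ / ⟪α v, α v⟫) • α v)

set_option maxHeartbeats 1000000 in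
/-- **Derivative estimate for the projective action.** For `α ∈ GL(d, ℝ)`, a nonzero `v` and a
nonzero tangent vector `w ⊥ v`,
`1/(‖α‖·‖α⁻¹‖) ≤ ‖Dα(v)w‖ / ‖w‖ ≤ ‖α‖·‖α⁻¹‖`. -/
theorem projDeriv_norm_bounds {d : ℕ} (α : E d ≃L[ℝ] E d) (v w : E d)
    (hv : v ≠ 0) (hw : w ≠ 0) (hperp : ⟪v, w⟫ = 0) :
    1 / (‖(α : E d →L[ℝ] E d)‖ * ‖(α.symm : E d →L[ℝ] E d)‖)
        ≤ ‖projDeriv α v w‖ / ‖w‖ ∧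
      ‖projDeriv α v w‖ / ‖w‖ ≤ ‖(α : E d →L[ℝ] E d)‖ * ‖(α.symm : E d →L[ℝ] E d)‖ := by
  set A := (α : E d →L[ℝ] E d) with hA
  set B := (α.symm : E d →L[ℝ] E d) with hB
  have hαv : α v ≠ 0 := fun h => hv (by simpa using congrArg α.symm h)
  set c : ℝ := ⟪α w, α v⟫ / ⟪α v, α v⟫ with hc
  set P : E d := α w - c • α v with hP
  have hvv : ⟪α v, α v⟫ ≠ 0 := fun h => hαv (inner_self_eq_zero.mp h)
  have hPv : ⟪P, α v⟫ = 0 := by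
    rw [hP, inner_sub_left, real_inner_smul_left, hc, div_mul_cancel₀ _ hvv]
    ring
  have hP2 : ‖P‖ ≤ ‖α w‖ := by
    have h1 : ‖α w‖ ^ 2 = ‖P‖ ^ 2 + ‖c • α v‖ ^ 2 := by
      have e : α w = P + c • α v := by rw [hP]; abel
      rw [e, norm_add_sq_real, real_inner_smul_right, hPv]
      ring
    nlinarith [norm_nonneg P, norm_nonneg (α w), sq_nonneg ‖c • α v‖]
  have hBP : α.symm P = w - c • v := by rw [hP]; simp
  have hwpos : (0:ℝ) < ‖w‖ := norm_pos_iff.mpr hw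
  have hvpos : (0:ℝ) < ‖v‖ := norm_pos_iff.mpr hv
  have hαvpos : (0:ℝ) < ‖α v‖ := norm_pos_iff.mpr hαv
  have h3 : ‖w‖ ^ 2 ≤ ‖B‖ * ‖P‖ * ‖w‖ := by
    have e1 : ⟪α.symm P, w⟫ = ‖w‖ ^ 2 := by
      rw [hBP, inner_sub_left, real_inner_smul_left, hperp, real_inner_self_eq_norm_sq]
      ring
    have e2 : ‖α.symm P‖ ≤ ‖B‖ * ‖P‖ := B.le_opNorm P
    calc ‖w‖ ^ 2 = ⟪α.symm P, w⟫ := e1.symm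
      _ ≤ ‖α.symm P‖ * ‖w‖ := real_inner_le_norm _ _
      _ ≤ ‖B‖ * ‖P‖ * ‖w‖ := mul_le_mul_of_nonneg_right e2 (norm_nonneg w)
  have key1 : ‖w‖ ≤ ‖B‖ * ‖P‖ := by nlinarith
  have h4 : ‖v‖ ≤ ‖B‖ * ‖α v‖ := by
    have h := B.le_opNorm (α v)
    rwa [show B (α v) = v from α.symm_apply_apply v] at h
  have h5 : ‖α v‖ ≤ ‖A‖ * ‖v‖ := A.le_opNorm v
  have h6 : ‖α w‖ ≤ ‖A‖ * ‖w‖ := A.le_opNorm w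
  have hApos : (0:ℝ) < ‖A‖ := by nlinarith
  have hBpos : (0:ℝ) < ‖B‖ := by nlinarith
  have hnorm : ‖projDeriv α v w‖ = ‖v‖ / ‖α v‖ * ‖P‖ := by
    rw [projDeriv, ← hc, ← hP, norm_smul, Real.norm_eq_abs, abs_of_nonneg (by positivity)]
  rw [hnorm]
  constructor
  · rw [div_le_div_iff₀ (by positivity) hwpos, div_mul_eq_mul_div, div_mul_eq_mul_div,
      le_div_iff₀ hαvpos]
    nlinarith [mul_le_mul key1 h5 hαvpos.le (by positivity : (0:ℝ) ≤ ‖B‖ * ‖P‖),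
      norm_nonneg P]
  · rw [div_le_iff₀ hwpos, div_mul_eq_mul_div, div_le_iff₀ hαvpos]
    nlinarith [mul_le_mul h4 (hP2.trans h6) (norm_nonneg P) (by positivity : (0:ℝ) ≤ ‖B‖ * ‖α v‖)]
end
end

section
/- Suppose m̂ is a P(F̂)-invariant probability on M̂ × P(ℝ²) whose disintegration over the two-sided Markov measure μ̂ has conditional measures m̂_x̂ depending only on the negative coordinates of x̂. Then its projection m to M × P(ℝ²) (M the one-sided shift space) is a skew-product measure: there exists a measure vector η = (η_i)_{i∈X} with m = Σ_{i∈X} (μ | [0;i]) × η_i. -/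
open MeasureTheory
open scoped LinearAlgebra.Projectivization BigOperators

noncomputable section

namespace PaperNS

/-!
Fix a measurable `D ⊆ P(ℝ²)`. The function `x ↦ ν x D` depends only on the past but need not be
measurable. Averaging a measurable minorant with the same integral against the
conditional-expectation kernel of the σ-algebra of past cylinder events yields a past-measurable
density `h` of `C ↦ m̂ (C ×ˢ D)` with respect to `μ̂`. On the cylinder `[0;i]` the preimage of a
set of one-sided sequences coincides with a future event, which the product structure makes
independent of the past-measurable `h`. Hence
`m̂ ((π⁻¹ C ∩ [0;i]) ×ˢ D) = μ̂ (π⁻¹ C ∩ [0;i]) * m̂ ([0;i] ×ˢ D) / μ̂ [0;i]`,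
the product formula with `η i = m̂ ([0;i] ×ˢ ·) / μ̂ [0;i]`.
-/

open ProbabilityTheory
open scoped ENNReal

section LIntegral

variable {Ω : Type*} {m : MeasurableSpace Ω} [mΩ : MeasurableSpace Ω] {μ : Measure Ω}

theorem setLIntegral_eq_of_ae_le_of_lintegral_eq {f g : Ω → ℝ≥0∞} (hfg : f ≤ᵐ[μ] g)
    (h_eq : ∫⁻ x, f x ∂μ = ∫⁻ x, g x ∂μ) (hg : ∫⁻ x, g x ∂μ ≠ ∞) {C : Set Ω}
    (hC : MeasurableSet C) :
    ∫⁻ x in C, f x ∂μ = ∫⁻ x in C, g x ∂μ := by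
  have hle : ∀ s, ∫⁻ x in s, f x ∂μ ≤ ∫⁻ x in s, g x ∂μ := fun _ =>
    lintegral_mono_ae (ae_restrict_of_ae hfg)
  refine le_antisymm (hle C) (ENNReal.le_of_add_le_add_right
    (ne_top_of_le_ne_top hg (setLIntegral_le_lintegral Cᶜ g)) ?_)
  calc ∫⁻ x in C, g x ∂μ + ∫⁻ x in Cᶜ, g x ∂μ
      = ∫⁻ x in C, f x ∂μ + ∫⁻ x in Cᶜ, f x ∂μ := by
        rw [lintegral_add_compl g hC, lintegral_add_compl f hC, h_eq]
    _ ≤ ∫⁻ x in C, f x ∂μ + ∫⁻ x in Cᶜ, g x ∂μ := add_le_add le_rfl (hle Cᶜ)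

theorem setLIntegral_inter_mul_measure_eq (hm : m ≤ mΩ) {T I : Set Ω}
    (h_split : ∀ S, MeasurableSet[m] S → μ (S ∩ T ∩ I) * μ I = μ (S ∩ I) * μ (T ∩ I))
    {f : Ω → ℝ≥0∞} (hf : Measurable[m] f) :
    (∫⁻ x in T ∩ I, f x ∂μ) * μ I = μ (T ∩ I) * ∫⁻ x in I, f x ∂μ := by
  refine Measurable.ennreal_induction
    (motive := fun f => (∫⁻ x in T ∩ I, f x ∂μ) * μ I = μ (T ∩ I) * ∫⁻ x in I, f x ∂μ)
    ?_ ?_ ?_ hf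
  · intro c S hS
    rw [lintegral_indicator_const (hm S hS), lintegral_indicator_const (hm S hS),
      Measure.restrict_apply (hm S hS), Measure.restrict_apply (hm S hS), ← Set.inter_assoc,
      mul_assoc, h_split S hS]
    ring
  · intro f g _ hf hg hf' hg'
    simp only [Pi.add_apply]
    rw [lintegral_add_left (hf.mono hm le_rfl), lintegral_add_left (hf.mono hm le_rfl), add_mul,
      mul_add, hf', hg']
  · intro f hf hmono hf'
    dsimp only
    have hf₀ : ∀ n, Measurable (f n) := fun n => (hf n).mono hm le_rfl
    rw [lintegral_iSup hf₀ hmono, lintegral_iSup hf₀ hmono, ENNReal.iSup_mul, ENNReal.mul_iSup]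
    exact iSup_congr hf'

theorem setLIntegral_inter_eq_measure_mul [IsFiniteMeasure μ] (hm : m ≤ mΩ) {T I : Set Ω}
    (h_split : ∀ S, MeasurableSet[m] S → μ (S ∩ T ∩ I) * μ I = μ (S ∩ I) * μ (T ∩ I))
    {f : Ω → ℝ≥0∞} (hf : Measurable[m] f) :
    ∫⁻ x in T ∩ I, f x ∂μ = μ (T ∩ I) * ((μ I)⁻¹ * ∫⁻ x in I, f x ∂μ) := by
  rcases eq_or_ne (μ I) 0 with hI | hI
  · rw [setLIntegral_measure_zero _ _ (measure_mono_null Set.inter_subset_right hI),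
      measure_mono_null Set.inter_subset_right hI, zero_mul]
  calc ∫⁻ x in T ∩ I, f x ∂μ = (∫⁻ x in T ∩ I, f x ∂μ) * μ I * (μ I)⁻¹ := by
        rw [mul_assoc, ENNReal.mul_inv_cancel hI (measure_ne_top μ I), mul_one]
    _ = μ (T ∩ I) * ((μ I)⁻¹ * ∫⁻ x in I, f x ∂μ) := by
        rw [setLIntegral_inter_mul_measure_eq hm h_split hf]
        ring

theorem setLIntegral_eq_sum_inter_preimage {β : Type*} [Fintype β] [MeasurableSpace β]
    [MeasurableSingletonClass β] {φ : Ω → β} (hφ : Measurable φ) (f : Ω → ℝ≥0∞) {s : Set Ω}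
    (hs : MeasurableSet s) :
    ∫⁻ x in s, f x ∂μ = ∑ b, ∫⁻ x in s ∩ φ ⁻¹' {b}, f x ∂μ := by
  have hs_eq : s = ⋃ b, s ∩ φ ⁻¹' {b} := by ext; simp
  conv_lhs => rw [hs_eq]
  rw [lintegral_iUnion (fun b => hs.inter (hφ (measurableSet_singleton b)))
    (fun b c hbc => (pairwise_disjoint_fiber φ hbc).mono inf_le_right inf_le_right),
    tsum_fintype]

end LIntegral

section CondExpKernel

variable {Ω : Type*} {m : MeasurableSpace Ω} [mΩ : MeasurableSpace Ω] [StandardBorelSpace Ω]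
  {μ : Measure Ω} [IsFiniteMeasure μ]

theorem condExpKernel_ae_mem_of_mem (hm : m ≤ mΩ) {s : Set Ω} (hs : MeasurableSet[m] s) :
    ∀ᵐ x ∂μ, x ∈ s → ∀ᵐ y ∂condExpKernel μ m x, y ∈ s := by
  have h_null : (μ.trim hm ⊗ₘ condExpKernel μ m) (s ×ˢ sᶜ) = 0 := by
    rw [compProd_trim_condExpKernel, Measure.map_apply _ (hs.prod (hm s hs).compl)]
    · simp
    · exact (measurable_id'' hm).prodMk measurable_id
  rw [Measure.compProd_apply_prod hs (hm s hs).compl,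
    lintegral_eq_zero_iff (Kernel.measurable_coe _ (hm s hs).compl)] at h_null
  filter_upwards [ae_of_ae_trim hm ((ae_restrict_iff' hs).1 h_null)] with x hx hxs
  exact mem_ae_iff.2 (hx hxs)

theorem lintegral_lintegral_condExpKernel (hm : m ≤ mΩ) {f : Ω → ℝ≥0∞} (hf : Measurable f) :
    ∫⁻ x, ∫⁻ y, f y ∂condExpKernel μ m x ∂μ = ∫⁻ x, f x ∂μ := by
  rw [← lintegral_trim hm (Measurable.lintegral_kernel hf), ← Measure.lintegral_bind
    (Kernel.aemeasurable _) hf.aemeasurable, condExpKernel_comp_trim]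

end CondExpKernel

section CylinderEvents

variable {ι α : Type*} [MeasurableSpace α]

theorem dependsOn_mem_of_measurableSet_cylinderEvents {Δ : Set ι} {S : Set (ι → α)}
    (hS : MeasurableSet[cylinderEvents Δ] S) : DependsOn (· ∈ S) Δ := by
  have h_id : Measurable[.comap Δ.domRestrict MeasurableSpace.pi, cylinderEvents Δ]
      (id : (ι → α) → ι → α) := measurable_cylinderEvents_iff.2 fun i hi =>
    (measurable_pi_apply (⟨i, hi⟩ : Δ)).comp
      (comap_measurable (Δ.domRestrict (π := fun _ => α)))
  have h_le := h_id.comap_le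
  rw [MeasurableSpace.comap_id] at h_le
  obtain ⟨B, -, rfl⟩ := h_le S hS
  intro x y hxy
  simp only [Set.mem_preimage,
    show Δ.domRestrict x = Δ.domRestrict y from funext fun i => hxy i i.2]

variable [Countable ι] [Countable α] [StandardBorelSpace α] (μ : Measure (ι → α))
  [IsFiniteMeasure μ]

theorem ae_condExpKernel_cylinderEvents_eqOn (Δ : Set ι) :
    ∀ᵐ x ∂μ, ∀ᵐ y ∂condExpKernel μ (cylinderEvents Δ) x, ∀ i ∈ Δ, y i = x i := by
  have h_coord : ∀ i ∈ Δ, ∀ a : α, ∀ᵐ x ∂μ,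
      x i = a → ∀ᵐ y ∂condExpKernel μ (cylinderEvents Δ) x, y i = a := fun i hi a =>
    condExpKernel_ae_mem_of_mem (s := (fun x : ι → α => x i) ⁻¹' {a}) cylinderEvents_le_pi
      (measurable_cylinderEvent_apply hi (measurableSet_singleton a))
  filter_upwards [ae_all_iff.2 fun i : Δ => ae_all_iff.2 (h_coord i i.2)] with x hx
  filter_upwards [ae_all_iff.2 fun i : Δ => hx i (x i) rfl] with y hy i hi using hy ⟨i, hi⟩

theorem exists_measurable_cylinderEvents_setLIntegral_eq {Δ : Set ι} {g : (ι → α) → ℝ≥0∞}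
    (hg : DependsOn g Δ) (hg_int : ∫⁻ x, g x ∂μ ≠ ∞) :
    ∃ h : (ι → α) → ℝ≥0∞, Measurable[cylinderEvents Δ] h ∧
      ∀ C, MeasurableSet C → ∫⁻ x in C, h x ∂μ = ∫⁻ x in C, g x ∂μ := by
  -- `K x` lives on the `Δ`-fibre of `x`, where `g` is constant, so averaging a measurable
  -- minorant of `g` against it stays below `g`.
  obtain ⟨h₁, h₁_meas, h₁_le, h₁_eq⟩ := exists_measurable_le_lintegral_eq μ g
  set K := condExpKernel μ (cylinderEvents Δ)
  refine ⟨fun x => ∫⁻ y, h₁ y ∂K x, h₁_meas.lintegral_kernel, fun C hC =>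
    setLIntegral_eq_of_ae_le_of_lintegral_eq ?_ ?_ hg_int hC⟩
  · filter_upwards [ae_condExpKernel_cylinderEvents_eqOn μ Δ] with x hx
    calc ∫⁻ y, h₁ y ∂K x ≤ ∫⁻ _, g x ∂K x :=
          lintegral_mono_ae (hx.mono fun y hy => (h₁_le y).trans_eq (hg hy))
      _ = g x := by simp
  · rw [lintegral_lintegral_condExpKernel cylinderEvents_le_pi h₁_meas, h₁_eq]

end CylinderEvents

section TwoSidedShift

variable {α : Type*} [MeasurableSpace α]

theorem exists_dependsOn_Ioi_inter_eq (i : α) {C : Set (ℕ → α)} (hC : MeasurableSet C) :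
    ∃ T : Set (ℤ → α), MeasurableSet T ∧ DependsOn (· ∈ T) (Set.Ioi 0) ∧
      T ∩ {x | x 0 = i} = (fun x (n : ℕ) => x n) ⁻¹' C ∩ {x | x 0 = i} := by
  refine ⟨(fun x (n : ℕ) => Function.update x 0 i n) ⁻¹' C, ?_, ?_, ?_⟩
  · exact ((measurable_pi_lambda _ fun n => measurable_pi_apply _).comp measurable_update_left) hC
  · intro x y hxy
    have h_eq : ∀ n : ℕ, Function.update x 0 i n = Function.update y 0 i n := by
      intro n
      rcases Nat.eq_zero_or_pos n with rfl | hn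
      · simp
      · rw [Function.update_of_ne (by omega), Function.update_of_ne (by omega),
          hxy _ (Int.natCast_pos.2 hn)]
    simp only [Set.mem_preimage, funext h_eq]
  · ext x
    simp only [Set.mem_inter_iff, Set.mem_preimage, Set.mem_ofPred_eq]
    exact and_congr_left fun hx => by rw [← hx, Function.update_eq_self]

theorem setLIntegral_preimage_inter_cylinder_eq {μ : Measure (ℤ → α)} [IsFiniteMeasure μ] {i : α}
    (h_split : ∀ S T : Set (ℤ → α), MeasurableSet S → MeasurableSet T →
      (∀ x y : ℤ → α, (∀ n : ℤ, n < 0 → x n = y n) → (x ∈ S ↔ y ∈ S)) →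
      (∀ x y : ℤ → α, (∀ n : ℤ, 0 < n → x n = y n) → (x ∈ T ↔ y ∈ T)) →
      μ (S ∩ T ∩ {x | x 0 = i}) * μ {x | x 0 = i} = μ (S ∩ {x | x 0 = i}) * μ (T ∩ {x | x 0 = i}))
    {f : (ℤ → α) → ℝ≥0∞} (hf : Measurable[cylinderEvents (Set.Iio 0)] f) {C : Set (ℕ → α)}
    (hC : MeasurableSet C) :
    ∫⁻ x in (fun x (n : ℕ) => x n) ⁻¹' C ∩ {x | x 0 = i}, f x ∂μ =
      μ ((fun x (n : ℕ) => x n) ⁻¹' C ∩ {x | x 0 = i}) *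
        ((μ {x | x 0 = i})⁻¹ * ∫⁻ x in {x | x 0 = i}, f x ∂μ) := by
  obtain ⟨T, hT, hT_dep, hT_eq⟩ := exists_dependsOn_Ioi_inter_eq i hC
  rw [← hT_eq]
  refine setLIntegral_inter_eq_measure_mul cylinderEvents_le_pi (fun S hS => ?_) hf
  have hS_dep := dependsOn_mem_of_measurableSet_cylinderEvents hS
  exact h_split S T (cylinderEvents_le_pi S hS) hT (fun _ _ hxy => Iff.of_eq (hS_dep hxy))
    (fun _ _ hxy => Iff.of_eq (hT_dep hxy))

end TwoSidedShift

theorem projection_is_skew_product_general {q : ℕ}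
    (μhat : Measure (ℤ → Fin q)) [IsProbabilityMeasure μhat]
    -- product structure on each cylinder `[0;i]`: past and future are independent given `x 0 = i`
    (hsplit : ∀ (i : Fin q) (S T : Set (ℤ → Fin q)), MeasurableSet S → MeasurableSet T →
      (∀ x y : ℤ → Fin q, (∀ n : ℤ, n < 0 → x n = y n) → (x ∈ S ↔ y ∈ S)) →
      (∀ x y : ℤ → Fin q, (∀ n : ℤ, 0 < n → x n = y n) → (x ∈ T ↔ y ∈ T)) →
      μhat (S ∩ T ∩ {x | x 0 = i}) * μhat {x | x 0 = i}
        = μhat (S ∩ {x | x 0 = i}) * μhat (T ∩ {x | x 0 = i}))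
    (mhat : Measure ((ℤ → Fin q) × Pd 2)) [IsProbabilityMeasure mhat]
    -- disintegration with conditionals depending only on the negative coordinates
    (ν : (ℤ → Fin q) → Measure (Pd 2))
    (hdis : ∀ (C : Set (ℤ → Fin q)) (D : Set (Pd 2)), MeasurableSet C → MeasurableSet D →
      mhat (C ×ˢ D) = ∫⁻ x in C, ν x D ∂μhat)
    (hνneg : ∀ x y : ℤ → Fin q, (∀ n : ℤ, n < 0 → x n = y n) → ν x = ν y) :
    ∃ η : Fin q → Measure (Pd 2),
      mhat.map (fun z : (ℤ → Fin q) × Pd 2 => ((fun n : ℕ => z.1 (n : ℤ)), z.2))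
        = ∑ i, ((μhat.map (fun (x : ℤ → Fin q) (n : ℕ) => x (n : ℤ))).restrict
            {x : ℕ → Fin q | x 0 = i}).prod (η i) := by
  set π : (ℤ → Fin q) → ℕ → Fin q := fun x n => x n
  have hπ : Measurable π := measurable_pi_lambda _ fun n => measurable_pi_apply _
  refine ⟨fun i => (μhat {x | x 0 = i})⁻¹ • (mhat.restrict (Prod.fst ⁻¹' {x | x 0 = i})).map
    Prod.snd, Measure.ext_prod fun {C D} hC hD => ?_⟩
  obtain ⟨h, hh, hh_eq⟩ := exists_measurable_cylinderEvents_setLIntegral_eq μhat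
    (Δ := Set.Iio 0) (g := fun x => ν x D) (fun x y hxy => by simp only [hνneg x y hxy])
    (by rw [← setLIntegral_univ, ← hdis _ _ .univ hD]; exact measure_ne_top _ _)
  have h_dis : ∀ C, MeasurableSet C → mhat (C ×ˢ D) = ∫⁻ x in C, h x ∂μhat := fun C hC => by
    rw [hdis C D hC hD, hh_eq C hC]
  rw [Measure.map_apply (by fun_prop) (hC.prod hD), Measure.finsetSum_apply]
  change mhat ((π ⁻¹' C) ×ˢ D) = _
  rw [h_dis _ (hπ hC), setLIntegral_eq_sum_inter_preimage (measurable_pi_apply 0) h (hπ hC)]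
  refine Finset.sum_congr rfl fun i _ => ?_
  have hI : MeasurableSet {x : ℤ → Fin q | x 0 = i} :=
    measurableSet_eq_fun (measurable_pi_apply 0) measurable_const
  have hI' : MeasurableSet {x : ℕ → Fin q | x 0 = i} :=
    measurableSet_eq_fun (measurable_pi_apply 0) measurable_const
  refine (setLIntegral_preimage_inter_cylinder_eq (hsplit i) hh hC).trans ?_
  rw [Measure.prod_prod, Measure.restrict_apply hC, Measure.map_apply hπ (hC.inter hI'),
    Measure.smul_apply, Measure.map_apply measurable_snd hD,
    Measure.restrict_apply (measurable_snd hD), smul_eq_mul, Set.inter_comm (Prod.snd ⁻¹' D),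
    ← Set.prod_eq, h_dis _ hI]
  rfl

/-- **Projection of an adapted invariant measure is a skew-product.** Let `μ̂` be the two-sided
Markov measure on `M̂ = X^ℤ`, whose restriction to each cylinder `{x̂ | x̂ 0 = i}` is a product
of measures on past and future coordinates (stated here as conditional independence of events
depending only on negative, resp. positive, coordinates). Suppose `m̂` is a probability measure
on `M̂ × P(ℝ²)`, invariant under the projective cocycle `P(F̂)(x̂, v) = (f̂ x̂, A(x̂ 0) v)`,
projecting to `μ̂`, and admitting a disintegration `m̂(C × D) = ∫_C ν_x̂(D) dμ̂` whose
conditional measures `ν_x̂` depend only on the negative coordinates of `x̂`. Then the projection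
`m` of `m̂` to `M × P(ℝ²)` (forgetting negative coordinates) is a skew-product:
`m = ∑ i, (μ | [0;i]) × η_i` for some measure vector `η`. -/
theorem projection_is_skew_product {q : ℕ} (hq : 0 < q)
    (P : Fin q → Fin q → ℝ) (p : Fin q → ℝ)
    (hnonneg : ∀ i j, 0 ≤ P i j) (hstoch : ∀ i, ∑ j, P i j = 1)
    (haper : ∃ N : ℕ, 1 ≤ N ∧ ∀ i j, 0 < (Matrix.of P ^ N) i j)
    (hppos : ∀ i, 0 < p i) (hpsum : ∑ i, p i = 1)
    (hpstat : ∀ j, ∑ s, p s * P s j = p j)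
    (A : Fin q → (Fin 2 → ℝ) ≃ₗ[ℝ] (Fin 2 → ℝ))
    (μhat : Measure (ℤ → Fin q)) [IsProbabilityMeasure μhat]
    -- `μ̂` is the two-sided Markov measure:
    (hμhat : ∀ (m : ℤ) (n : ℕ) (w : Fin (n + 1) → Fin q),
      μhat {x | ∀ s : Fin (n + 1), x (m + (s : ℕ)) = w s}
        = ENNReal.ofReal (p (w 0) * ∏ s : Fin n, P (w s.castSucc) (w s.succ)))
    -- product structure on each cylinder `[0;i]`: past and future are independent given `x 0 = i`
    (hsplit : ∀ (i : Fin q) (S T : Set (ℤ → Fin q)), MeasurableSet S → MeasurableSet T →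
      (∀ x y : ℤ → Fin q, (∀ n : ℤ, n < 0 → x n = y n) → (x ∈ S ↔ y ∈ S)) →
      (∀ x y : ℤ → Fin q, (∀ n : ℤ, 0 < n → x n = y n) → (x ∈ T ↔ y ∈ T)) →
      μhat (S ∩ T ∩ {x | x 0 = i}) * μhat {x | x 0 = i}
        = μhat (S ∩ {x | x 0 = i}) * μhat (T ∩ {x | x 0 = i}))
    (mhat : Measure ((ℤ → Fin q) × Pd 2)) [IsProbabilityMeasure mhat]
    (hproj : mhat.map Prod.fst = μhat)
    -- invariance under the projective cocycle over the two-sided shift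
    (hinv : mhat.map (fun z : (ℤ → Fin q) × Pd 2 =>
        ((fun n => z.1 (n + 1)), act 2 (A (z.1 0)) z.2)) = mhat)
    -- disintegration with conditionals depending only on the negative coordinates
    (ν : (ℤ → Fin q) → Measure (Pd 2)) (hνprob : ∀ x, IsProbabilityMeasure (ν x))
    (hdis : ∀ (C : Set (ℤ → Fin q)) (D : Set (Pd 2)), MeasurableSet C → MeasurableSet D →
      mhat (C ×ˢ D) = ∫⁻ x in C, ν x D ∂μhat)
    (hνneg : ∀ x y : ℤ → Fin q, (∀ n : ℤ, n < 0 → x n = y n) → ν x = ν y) :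
    ∃ η : Fin q → Measure (Pd 2),
      mhat.map (fun z : (ℤ → Fin q) × Pd 2 => ((fun n : ℕ => z.1 (n : ℤ)), z.2))
        = ∑ i, ((μhat.map (fun (x : ℤ → Fin q) (n : ℕ) => x (n : ℤ))).restrict
            {x : ℕ → Fin q | x 0 = i}).prod (η i) :=
  projection_is_skew_product_general μhat hsplit mhat ν hdis hνneg

end PaperNS
end
end

section
/- Let η, η¹, I, O be finite Borel measures on P(ℝ^d) with η = η¹ + I + O, where I is concentrated on U₁^c ∩ V and O has ‖O‖ ≤ ‖I‖ ≤ (2/9)κ, and suppose ξ̃ is a symmetric measure on P(ℝ^d)² with marginals ≥ the relevant pieces such that ξ̃(U₃ × U₃) ≥ (5/9)κ. Then the measure ξ'' defined by ξ'' = [ (ξ̃ | V×V) − (‖ζ‖/‖η³‖)(ξ̃ | U₃×U₃) ] + (1/‖I‖)[(O|U₂)×I + I×(O|U₂)] + (1/‖η³‖)[ζ×η³ + η³×ζ], with η³ the marginal of (ξ̃ | U₃×U₃) and ζ = (1 − ‖O|U₂‖/‖I‖)·I + (O|U₂^c), is a positive symmetric measure whose marginals on either coordinate equal η restricted to V (i.e.,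 ξ'' is a symmetric self-coupling of η|V), provided ‖ζ‖ ≤ ‖η³‖ and η¹ is the marginal of ξ̃|V×V. -/
open MeasureTheory
open scoped ENNReal

/-! The three brackets of `ξ''` are symmetric: restricting the swap-invariant `ξ̃` to a square
keeps it swap-invariant, and so does subtracting the smaller symmetric measure, while the other
two brackets are symmetrized products. In the first marginal, the mass `(‖ζ‖/‖η³‖)·η³` removed
from `ξ̃|V×V` is returned by `ζ×η³`, leaving `η¹`; the product terms contribute
`O|U₂ + (‖O|U₂‖/‖I‖)·I + ζ = I + O`. As `η¹`, `I`, `O` live on `V`, the total is `η|V`, and the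
second marginal agrees with the first by symmetry. -/

lemma ENNReal.smul_add_one_sub_smul {M : Type*} [AddCommMonoid M] [Module ℝ≥0∞ M] {a : ℝ≥0∞}
    (ha : a ≤ 1) (x : M) : a • x + (1 - a) • x = x := by
  rw [← add_smul, add_tsub_cancel_of_le ha, one_smul]

namespace MeasureTheory.Measure

variable {α β : Type*} [MeasurableSpace α] [MeasurableSpace β]

lemma map_sub_of_le {μ ν : Measure α} [IsFiniteMeasure ν] {f : α → β} (hf : Measurable f)
    (h : ν ≤ μ) : (μ - ν).map f = μ.map f - ν.map f := by
  have : IsFiniteMeasure (ν.map f) := isFiniteMeasure_map ν f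
  conv_rhs => rw [← sub_add_cancel_of_le h, Measure.map_add _ _ hf]
  exact (Measure.add_sub_cancel).symm

lemma map_swap_restrict_prod_self {μ : Measure (α × α)} (hμ : μ.map Prod.swap = μ)
    (s : Set α) : (μ.restrict (s ×ˢ s)).map Prod.swap = μ.restrict (s ×ˢ s) := by
  have h := (MeasurableEquiv.prodComm (α := α) (β := α)).measurableEmbedding.restrict_map μ
    (s ×ˢ s)
  change (μ.map Prod.swap).restrict _ = (μ.restrict (Prod.swap ⁻¹' _)).map Prod.swap at h
  rw [hμ, Set.preimage_swap_prod] at h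
  exact h.symm

lemma map_snd_eq_map_fst_of_map_swap_eq {μ : Measure (α × α)} (hμ : μ.map Prod.swap = μ) :
    μ.map Prod.snd = μ.map Prod.fst := by
  conv_rhs => rw [← hμ, map_map measurable_fst measurable_swap]
  rfl

lemma map_fst_restrict_prod_restrict (μ : Measure (α × β)) {s : Set α} (hs : MeasurableSet s)
    (t : Set β) :
    ((μ.restrict (s ×ˢ t)).map Prod.fst).restrict s = (μ.restrict (s ×ˢ t)).map Prod.fst := by
  rw [restrict_map measurable_fst hs, restrict_restrict (measurable_fst hs)]
  congr 2
  exact Set.inter_eq_right.2 fun p hp => hp.1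

lemma smul_restrict_le_restrict (μ : Measure α) {c : ℝ≥0∞} (hc : c ≤ 1) {s t : Set α}
    (hst : s ⊆ t) : c • μ.restrict s ≤ μ.restrict t :=
  calc c • μ.restrict s ≤ (1 : ℝ≥0∞) • μ.restrict s := by gcongr
    _ = μ.restrict s := one_smul _ _
    _ ≤ μ.restrict t := restrict_mono hst le_rfl

lemma map_restrict_sub_smul_add_smul_map (μ : Measure α) [IsFiniteMeasure μ] {c : ℝ≥0∞}
    (hc : c ≤ 1) {s t : Set α} (hst : s ⊆ t) {f : α → β} (hf : Measurable f) :
    (μ.restrict t - c • μ.restrict s).map f + c • (μ.restrict s).map f = (μ.restrict t).map f := by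
  have hle := smul_restrict_le_restrict μ hc hst
  have := isFiniteMeasure_of_le _ hle
  rw [← Measure.map_smul, ← Measure.map_add _ _ hf, sub_add_cancel_of_le hle]

lemma map_swap_restrict_prod_self_sub_smul {μ : Measure (α × α)} [IsFiniteMeasure μ]
    (hμ : μ.map Prod.swap = μ) {c : ℝ≥0∞} (hc : c ≤ 1) {s t : Set α} (hst : s ⊆ t) :
    (μ.restrict (t ×ˢ t) - c • μ.restrict (s ×ˢ s)).map Prod.swap
      = μ.restrict (t ×ˢ t) - c • μ.restrict (s ×ˢ s) := by
  have hle := smul_restrict_le_restrict μ hc (Set.prod_mono hst hst)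
  have := isFiniteMeasure_of_le _ hle
  rw [map_sub_of_le measurable_swap hle, Measure.map_smul, map_swap_restrict_prod_self hμ,
    map_swap_restrict_prod_self hμ]

lemma map_fst_inv_smul_prod_add_prod {μ ν : Measure α} [SFinite μ]
    [IsFiniteMeasure ν] (hμν : μ Set.univ ≤ ν Set.univ) :
    ((ν Set.univ)⁻¹ • (μ.prod ν + ν.prod μ)).map Prod.fst
      = μ + (μ Set.univ / ν Set.univ) • ν := by
  rw [Measure.map_smul, Measure.map_add _ _ measurable_fst, map_fst_prod, map_fst_prod, smul_add,
    smul_smul, smul_smul, ← ENNReal.div_eq_inv_mul, ← ENNReal.div_eq_inv_mul]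
  congr 1
  -- a null `ν` forces `μ = 0`, so the junk value `0⁻¹ = ∞` is harmless
  rcases eq_or_ne (ν Set.univ) 0 with hν | hν
  · rw [measure_univ_eq_zero.1 (le_zero_iff.1 (hμν.trans_eq hν)), smul_zero]
  · rw [ENNReal.div_self hν (measure_ne_top _ _), one_smul]

lemma map_swap_prod_add_prod (μ ν : Measure α) [SFinite μ] [SFinite ν] :
    (μ.prod ν + ν.prod μ).map Prod.swap = μ.prod ν + ν.prod μ := by
  rw [Measure.map_add _ _ measurable_swap, prod_swap, prod_swap, add_comm]

lemma restrict_add_smul_add_one_sub_smul_add_restrict_compl {μ ν : Measure α} {s : Set α}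
    (hs : MeasurableSet s) (hμν : μ s ≤ ν Set.univ) :
    μ.restrict s + (μ s / ν Set.univ) • ν + ((1 - μ s / ν Set.univ) • ν + μ.restrict sᶜ)
      = ν + μ := by
  have hν : (μ s / ν Set.univ) • ν + (1 - μ s / ν Set.univ) • ν = ν :=
    ENNReal.smul_add_one_sub_smul (ENNReal.div_le_of_le_mul (by rwa [one_mul])) ν
  conv_rhs => rw [← restrict_add_restrict_compl (μ := μ) hs, ← hν]
  abel

end MeasureTheory.Measure

theorem corrected_coupling_is_self_coupling_general {Y : Type*} [MeasurableSpace Y]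
    (U₁ U₂ U₃ V : Set Y)
    (h32 : U₃ ⊆ U₂) (h21 : U₂ ⊆ U₁) (h1V : U₁ ⊆ V)
    (hU₂ : MeasurableSet U₂)
    (hV : MeasurableSet V)
    (η η₁ I O : Measure Y)
    [IsFiniteMeasure I]
    (hdecomp : η = η₁ + I + O)
    (hIconc : I ((U₁ᶜ ∩ V)ᶜ) = 0)
    (hOconc : O Vᶜ = 0)
    (hOI : O Set.univ ≤ I Set.univ)
    (ξt : Measure (Y × Y)) [IsFiniteMeasure ξt]
    (hsymm : ξt.map Prod.swap = ξt)
    (hη₁ : η₁ = (ξt.restrict (V ×ˢ V)).map Prod.fst)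
    (η₃ : Measure Y) (hη₃ : η₃ = (ξt.restrict (U₃ ×ˢ U₃)).map Prod.fst)
    (ζ : Measure Y)
    (hζdef : ζ = (1 - O U₂ / I Set.univ) • I + O.restrict U₂ᶜ)
    (hζη₃ : ζ Set.univ ≤ η₃ Set.univ)
    (ξ'' : Measure (Y × Y))
    (hξ'' : ξ'' = (ξt.restrict (V ×ˢ V) - (ζ Set.univ / η₃ Set.univ) • ξt.restrict (U₃ ×ˢ U₃))
      + (I Set.univ)⁻¹ • ((O.restrict U₂).prod I + I.prod (O.restrict U₂))
      + (η₃ Set.univ)⁻¹ • (ζ.prod η₃ + η₃.prod ζ)) :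
    ξ''.map Prod.swap = ξ'' ∧
      ξ''.map Prod.fst = η.restrict V ∧ ξ''.map Prod.snd = η.restrict V := by
  have : IsFiniteMeasure O := ⟨hOI.trans_lt (measure_lt_top _ _)⟩
  have : IsFiniteMeasure η₃ := hη₃ ▸ inferInstance
  have : IsFiniteMeasure ζ := ⟨hζη₃.trans_lt (measure_lt_top _ _)⟩
  have hU₃V : U₃ ⊆ V := h32.trans (h21.trans h1V)
  have hc : ζ Set.univ / η₃ Set.univ ≤ 1 := ENNReal.div_le_of_le_mul (by rwa [one_mul])
  have hswap : ξ''.map Prod.swap = ξ'' := by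
    rw [hξ'', Measure.map_add _ _ measurable_swap, Measure.map_add _ _ measurable_swap,
      Measure.map_smul, Measure.map_smul, Measure.map_swap_prod_add_prod,
      Measure.map_swap_prod_add_prod, Measure.map_swap_restrict_prod_self_sub_smul hsymm hc hU₃V]
  have hηV : η.restrict V = η₁ + I + O := by
    have hIV : I Vᶜ = 0 := measure_mono_null (fun x hx hx' => hx hx'.2 : Vᶜ ⊆ (U₁ᶜ ∩ V)ᶜ) hIconc
    rw [hdecomp, Measure.restrict_add, Measure.restrict_add,
      Measure.restrict_eq_self_of_ae_mem hIV, Measure.restrict_eq_self_of_ae_mem hOconc, hη₁,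
      Measure.map_fst_restrict_prod_restrict ξt hV]
  have hOU₂ : O U₂ ≤ I Set.univ := (measure_mono (Set.subset_univ _)).trans hOI
  have hIO : O.restrict U₂ + (O U₂ / I Set.univ) • I + ζ = I + O := by
    rw [hζdef, Measure.restrict_add_smul_add_one_sub_smul_add_restrict_compl hU₂ hOU₂]
  have hfst : ξ''.map Prod.fst = η.restrict V := by
    rw [hξ'', Measure.map_add _ _ measurable_fst, Measure.map_add _ _ measurable_fst,
      Measure.map_fst_inv_smul_prod_add_prod (by rwa [Measure.restrict_apply_univ]),
      Measure.map_fst_inv_smul_prod_add_prod hζη₃, Measure.restrict_apply_univ, hηV, hη₁,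
      ← Measure.map_restrict_sub_smul_add_smul_map ξt hc (Set.prod_mono hU₃V hU₃V) measurable_fst,
      ← hη₃, add_assoc _ I, ← hIO]
    abel
  exact ⟨hswap, hfst, (Measure.map_snd_eq_map_fst_of_map_swap_eq hswap).trans hfst⟩

/-- **Lemma (the corrected coupling is a symmetric self-coupling).** Let
`U₃ ⊆ U₂ ⊆ U₁ ⊆ V` be Borel subsets and `κ > 0`. Let `η = η¹ + I + O` be finite measures with
`I` concentrated on `U₁ᶜ ∩ V`, `O` concentrated on `V`, `‖O‖ ≤ ‖I‖ ≤ (2/9)κ`, and let `ξ̃` be a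
finite symmetric measure on the square with `ξ̃(U₃ × U₃) ≥ (5/9)κ`, such that `η¹` is the
(first-coordinate) marginal of `ξ̃ | V × V`. Set `η³` = marginal of `ξ̃ | U₃ × U₃` and
`ζ = (1 − ‖O|U₂‖/‖I‖)·I + O|U₂ᶜ`. Provided `‖ζ‖ ≤ ‖η³‖`, the measure
`ξ'' = [ (ξ̃|V×V) − (‖ζ‖/‖η³‖)(ξ̃|U₃×U₃) ] + (1/‖I‖)[(O|U₂)×I + I×(O|U₂)]
      + (1/‖η³‖)[ζ×η³ + η³×ζ]`
is a positive symmetric measure both of whose marginals equal `η` restricted to `V`, i.e. `ξ''`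
is a symmetric self-coupling of `η|V`. -/
theorem corrected_coupling_is_self_coupling {Y : Type*} [MeasurableSpace Y]
    (U₁ U₂ U₃ V : Set Y)
    (h32 : U₃ ⊆ U₂) (h21 : U₂ ⊆ U₁) (h1V : U₁ ⊆ V)
    (hU₁ : MeasurableSet U₁) (hU₂ : MeasurableSet U₂) (hU₃ : MeasurableSet U₃)
    (hV : MeasurableSet V)
    (κ : ℝ≥0∞) (hκ : 0 < κ) (hκfin : κ ≠ ∞)
    (η η₁ I O : Measure Y)
    [IsFiniteMeasure η] [IsFiniteMeasure η₁] [IsFiniteMeasure I] [IsFiniteMeasure O]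
    (hdecomp : η = η₁ + I + O)
    (hIconc : I ((U₁ᶜ ∩ V)ᶜ) = 0)
    (hOconc : O Vᶜ = 0)
    (hOI : O Set.univ ≤ I Set.univ) (hIκ : I Set.univ ≤ 2 / 9 * κ)
    (hIpos : 0 < I Set.univ)
    (ξt : Measure (Y × Y)) [IsFiniteMeasure ξt]
    (hsymm : ξt.map Prod.swap = ξt)
    (hξ3 : 5 / 9 * κ ≤ ξt (U₃ ×ˢ U₃))
    (hη₁ : η₁ = (ξt.restrict (V ×ˢ V)).map Prod.fst)
    (η₃ : Measure Y) (hη₃ : η₃ = (ξt.restrict (U₃ ×ˢ U₃)).map Prod.fst)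
    (ζ : Measure Y)
    (hζdef : ζ = (1 - O U₂ / I Set.univ) • I + O.restrict U₂ᶜ)
    (hζη₃ : ζ Set.univ ≤ η₃ Set.univ)
    (ξ'' : Measure (Y × Y))
    (hξ'' : ξ'' = (ξt.restrict (V ×ˢ V) - (ζ Set.univ / η₃ Set.univ) • ξt.restrict (U₃ ×ˢ U₃))
      + (I Set.univ)⁻¹ • ((O.restrict U₂).prod I + I.prod (O.restrict U₂))
      + (η₃ Set.univ)⁻¹ • (ζ.prod η₃ + η₃.prod ζ)) :
    ξ''.map Prod.swap = ξ'' ∧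
      ξ''.map Prod.fst = η.restrict V ∧ ξ''.map Prod.snd = η.restrict V :=
  corrected_coupling_is_self_coupling_general U₁ U₂ U₃ V h32 h21 h1V hU₂ hV η η₁ I O hdecomp hIconc
    hOconc hOI ξt hsymm hη₁ η₃ hη₃ ζ hζdef hζη₃ ξ'' hξ''
end
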